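/- arXiv:1207.1149 — 2 statements merged into one kernel-verified Lean document; each statement's English description precedes it below -/
import Mathlib

section
/- Let A ∈ Z^{m×n} be a matrix of rank r and let Δ(A) denote the maximum absolute value of a subdeterminant of A. Then every element v of the Graver basis of A satisfies ||v||_1 ≤ (n - r)(r + 1)Δ(A). -/
/-- Two integer vectors lie in the same orthant (are sign-compatible). -/
def SameOrthant {n : Type*} (u v : n → ℤ) : Prop := ∀ i, 0 ≤ u i * v i

/-- `v` is an element of the Graver basis of the integer matrix `E`:
`v` is a nonzero integer vector in the kernel of `E` that cannot be written as a
sum `v = v' + v''` of two nonzero integer kernel vectors lying in the same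
orthant as `v`. -/
def IsGraver {m n : Type*} [Fintype n] (E : Matrix m n ℤ) (v : n → ℤ) : Prop :=
  v ≠ 0 ∧ E.mulVec v = 0 ∧
    ∀ v' v'' : n → ℤ, v' ≠ 0 → v'' ≠ 0 → E.mulVec v' = 0 → E.mulVec v'' = 0 →
      SameOrthant v v' → SameOrthant v v'' → v ≠ v' + v''

/-!
Over `ℚ`, a kernel vector `v` of `A` is a sum of linearly independent circuits of `ker A`
(kernel vectors of minimal support), each sign-conformal to `v`: subtract from `v` the largest
multiple of a conformal circuit that keeps the remainder conformal, which kills a coordinate, and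
recurse. By Cramer's rule every circuit is a positive multiple `μ • w` of an integer kernel vector
whose at most `t + 1 ≤ r + 1` nonzero entries are `t × t` subdeterminants of `A`, so
`‖w‖₁ ≤ (r + 1) Δ`, and linear independence allows at most `dim ker A = n - r` circuits. If `v` is
a Graver element, every `μ ≤ 1`, since otherwise `w` would be a proper conformal summand of `v`;
hence `‖v‖₁ ≤ ∑ μ ‖w‖₁ ≤ (n - r) (r + 1) Δ`.
-/

open Matrix Finset Function

section Circuit

variable {ι K : Type*} [Field K]

def IsCircuit (W : Submodule K (ι → K)) (c : ι → K) : Prop :=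
  c ∈ W ∧ c ≠ 0 ∧ ∀ x ∈ W, support x ⊂ support c → x = 0

theorem IsCircuit.smul {W : Submodule K (ι → K)} {c : ι → K} (hc : IsCircuit W c) {a : K}
    (ha : a ≠ 0) : IsCircuit W (a • c) := by
  refine ⟨W.smul_mem a hc.1, smul_ne_zero ha hc.2.1, fun x hx hsub => hc.2.2 x hx ?_⟩
  rwa [support_const_smul_of_ne_zero a c ha] at hsub

end Circuit

section Conformal

variable {ι K : Type*} [Field K] [LinearOrder K]

def SignConformal (x u : ι → K) : Prop := ∀ j, x j ≠ 0 → 0 < x j * u j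

namespace SignConformal

variable {x y u : ι → K}

theorem apply_eq_zero (h : SignConformal x u) {j : ι} (hj : u j = 0) : x j = 0 := by
  by_contra hx
  simpa [hj] using h j hx

theorem support_subset (h : SignConformal x u) : support x ⊆ support u :=
  fun _ hx hu => hx (h.apply_eq_zero hu)

theorem mul_nonneg (h : SignConformal x u) (j : ι) : 0 ≤ x j * u j := by
  by_cases hx : x j = 0
  · simp [hx]
  · exact (h j hx).le

variable [IsStrictOrderedRing K]

theorem refl (x : ι → K) : SignConformal x x := fun _ hj => mul_self_pos.2 hj

theorem trans (hxy : SignConformal x y) (hyu : SignConformal y u) : SignConformal x u := by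
  intro j hx
  have hxy' := hxy j hx
  have hyu' := hyu j fun hy => by simp [hy] at hxy'
  exact pos_of_mul_pos_left (by nlinarith [mul_pos hxy' hyu']) (mul_self_nonneg (y j))

theorem smul (h : SignConformal x u) {a : K} (ha : 0 < a) : SignConformal (a • x) u := by
  intro j hj
  rw [Pi.smul_apply, smul_eq_mul, mul_assoc]
  exact mul_pos ha (h j (right_ne_zero_of_mul hj))

end SignConformal

variable [IsStrictOrderedRing K]

theorem exists_sub_smul_signConformal [Fintype ι] {x y : ι → K} (hyx : support y ⊆ support x)
    (hpos : ∃ j, 0 < y j * x j) :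
    ∃ a : K, 0 < a ∧ SignConformal (x - a • y) x ∧ ∃ j, x j ≠ 0 ∧ (x - a • y) j = 0 := by
  classical
  obtain ⟨j₀, hj₀, hmin⟩ := exists_min_image {j | 0 < y j * x j} (fun j => x j / y j)
    (by obtain ⟨j, hj⟩ := hpos; exact ⟨j, by simpa using hj⟩)
  rw [mem_filter_univ] at hj₀
  have hy₀ : y j₀ ≠ 0 := left_ne_zero_of_mul hj₀.ne'
  have ha : 0 < x j₀ / y j₀ := by
    rw [show x j₀ / y j₀ = y j₀ * x j₀ / (y j₀ * y j₀) by field_simp]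
    exact div_pos hj₀ (mul_self_pos.2 hy₀)
  refine ⟨x j₀ / y j₀, ha, fun j hj => ?_, j₀, right_ne_zero_of_mul hj₀.ne', by simp [hy₀]⟩
  have hx : x j ≠ 0 := fun hx => hj <| by
    have hy : y j = 0 := not_ne_iff.1 fun hy => hyx hy hx
    simp [hx, hy]
  have hle : x j₀ / y j₀ * (y j * x j) ≤ x j * x j := by
    rcases le_or_gt (y j * x j) 0 with hyxj | hyxj
    · nlinarith [mul_self_nonneg (x j)]
    · have hy : y j ≠ 0 := left_ne_zero_of_mul hyxj.ne'
      calc x j₀ / y j₀ * (y j * x j) ≤ x j / y j * (y j * x j) :=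
            mul_le_mul_of_nonneg_right (hmin j (by simpa using hyxj)) hyxj.le
        _ = x j * x j := by field_simp
  refine lt_of_le_of_ne ?_ (mul_ne_zero hj hx).symm
  simp only [Pi.sub_apply, Pi.smul_apply, smul_eq_mul]
  nlinarith

theorem exists_isCircuit_signConformal [Fintype ι] {W : Submodule K (ι → K)} {u : ι → K}
    (hu : u ∈ W) (hu0 : u ≠ 0) : ∃ c, IsCircuit W c ∧ SignConformal c u := by
  obtain ⟨x, ⟨hxW, hx0, hxu⟩, hmin⟩ := (InvImage.wf support wellFounded_lt).has_min
    {x | x ∈ W ∧ x ≠ 0 ∧ SignConformal x u} ⟨u, hu, hu0, .refl u⟩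
  refine ⟨x, ⟨hxW, hx0, fun y hyW hyx => ?_⟩, hxu⟩
  by_contra hy0
  obtain ⟨j, hj⟩ : ∃ j, y j ≠ 0 := Function.ne_iff.1 hy0
  have hxj : x j ≠ 0 := hyx.1 hj
  obtain ⟨z, hzW, hzy, hpos⟩ : ∃ z ∈ W, support z = support y ∧ ∃ j, 0 < z j * x j := by
    rcases (mul_ne_zero hj hxj).lt_or_gt with h | h
    · exact ⟨-y, W.neg_mem hyW, support_neg y, j, by simpa [neg_mul] using h⟩
    · exact ⟨y, hyW, rfl, j, h⟩
  obtain ⟨a, -, hconf, j₁, hxj₁, hj₁⟩ := exists_sub_smul_signConformal (hzy ▸ hyx.1) hpos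
  obtain ⟨j₂, hxj₂, hyj₂⟩ := Set.exists_of_ssubset hyx
  refine hmin (x - a • z) ⟨W.sub_mem hxW (W.smul_mem a hzW), fun h => hxj₂ ?_, hconf.trans hxu⟩
    (Set.ssubset_iff_of_subset hconf.support_subset |>.2 ⟨j₁, hxj₁, fun h => h hj₁⟩)
  have : z j₂ = 0 := by rw [← Function.notMem_support, hzy]; exact hyj₂
  simpa [this] using congrFun h j₂

theorem exists_sum_isCircuit_signConformal [Fintype ι] {W : Submodule K (ι → K)} {u : ι → K}
    (hu : u ∈ W) : ∃ (k : ℕ) (c : Fin k → ι → K), (∀ i, IsCircuit W (c i)) ∧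
      (∀ i, SignConformal (c i) u) ∧ LinearIndependent K c ∧ ∑ i, c i = u := by
  induction hs : support u using WellFoundedLT.induction generalizing u with
  | _ s ih =>
  subst hs
  by_cases hu0 : u = 0
  · exact ⟨0, Fin.elim0, Fin.rec0, Fin.rec0, linearIndependent_empty_type, by simp [hu0]⟩
  obtain ⟨c₀, hc₀, hc₀u⟩ := exists_isCircuit_signConformal hu hu0
  obtain ⟨j, hj⟩ : ∃ j, c₀ j ≠ 0 := Function.ne_iff.1 hc₀.2.1
  obtain ⟨a, ha, hconf, j₀, huj₀, hj₀⟩ :=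
    exists_sub_smul_signConformal hc₀u.support_subset ⟨j, hc₀u j hj⟩
  obtain ⟨k, c, hc, hcu, hind, hsum⟩ := ih _
    (Set.ssubset_iff_of_subset hconf.support_subset |>.2 ⟨j₀, huj₀, fun h => h hj₀⟩)
    (W.sub_mem hu (W.smul_mem a hc₀.1)) rfl
  refine ⟨k + 1, Fin.cons (a • c₀) c, Fin.cases (hc₀.smul ha.ne') hc,
    Fin.cases (hc₀u.smul ha) fun i => (hcu i).trans hconf,
    linearIndependent_finCons.2 ⟨hind, fun hmem => ?_⟩, by simp [Fin.sum_univ_succ, hsum]⟩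
  -- the later circuits all vanish at the coordinate `j₀` killed here, but `a • c₀` does not
  have hspan : Submodule.span K (Set.range c) ≤ LinearMap.ker (LinearMap.proj j₀) :=
    Submodule.span_le.2 <| Set.range_subset_iff.2 fun i => (hcu i).apply_eq_zero hj₀
  have : a * c₀ j₀ = u j₀ := by simpa [sub_eq_zero, eq_comm] using hj₀
  exact huj₀ (this ▸ hspan hmem)

theorem abs_apply_le_of_sum_signConformal {κ : Type*} [Fintype κ] {c : κ → ι → K} {u : ι → K}
    (hc : ∀ i, SignConformal (c i) u) (hsum : ∑ i, c i = u) (i : κ) (j : ι) :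
    |c i j| ≤ |u j| := by
  by_cases hcij : c i j = 0
  · simp [hcij]
  have hu : 0 < |u j| := abs_pos.2 fun hu => hcij ((hc i).apply_eq_zero hu)
  refine le_of_mul_le_mul_right ?_ hu
  calc |c i j| * |u j| = c i j * u j := by rw [← abs_mul, abs_of_pos (hc i j hcij)]
    _ ≤ ∑ l, c l j * u j := single_le_sum (fun l _ => (hc l).mul_nonneg j) (mem_univ i)
    _ = |u j| * |u j| := by rw [← sum_mul, ← Finset.sum_apply, hsum, abs_mul_abs_self]

end Conformal

section Minors

variable {m n κ : Type*} [Fintype n] [Fintype κ]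

theorem Matrix.mulVec_eq_submatrix_mulVec_comp {R : Type*} [NonUnitalNonAssocSemiring R]
    (M : Matrix m n R) {g : κ → n} (hg : Injective g) {x : n → R}
    (hx : ∀ i ∉ Set.range g, x i = 0) : M *ᵥ x = M.submatrix id g *ᵥ (x ∘ g) := by
  ext i
  exact (Fintype.sum_of_injective g hg _ _ (fun j hj => by simp [hx j hj]) fun _ => rfl).symm

variable [DecidableEq κ] {R : Type*} [CommRing R] [IsDomain R] {M : Matrix m n R} {f : κ → m}
  {g : κ → n}

theorem Matrix.eq_zero_of_submatrix_det_ne_zero (hg : Injective g)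
    (hdet : (M.submatrix f g).det ≠ 0) {x : n → R} (hx : ∀ i ∉ Set.range g, x i = 0)
    (hMx : M.submatrix f id *ᵥ x = 0) : x = 0 := by
  have hxg : x ∘ g = 0 := eq_zero_of_mulVec_eq_zero hdet <| by
    rwa [(M.submatrix f id).mulVec_eq_submatrix_mulVec_comp hg hx] at hMx
  ext i
  by_cases hi : i ∈ Set.range g
  · obtain ⟨l, rfl⟩ := hi
    exact congrFun hxg l
  · exact hx i hi

theorem Matrix.smul_eq_smul_of_submatrix_det_ne_zero (hg : Injective g)
    (hdet : (M.submatrix f g).det ≠ 0) {j : n} {x y : n → R}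
    (hx : ∀ i ∉ Set.range g, i ≠ j → x i = 0) (hy : ∀ i ∉ Set.range g, i ≠ j → y i = 0)
    (hMx : M.submatrix f id *ᵥ x = 0) (hMy : M.submatrix f id *ᵥ y = 0) : y j • x = x j • y := by
  refine sub_eq_zero.1 <| eq_zero_of_submatrix_det_ne_zero hg hdet (fun i hi => ?_) ?_
  · by_cases hij : i = j
    · simp [hij, mul_comm]
    · simp [hx i hi hij, hy i hi hij]
  · rw [mulVec_sub, mulVec_smul, mulVec_smul, hMx, hMy, smul_zero, smul_zero, sub_zero]

end Minors

theorem Matrix.exists_submatrix_det_ne_zero {m K : Type*} [Fintype m] [Field K] {t : ℕ}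
    (P : Matrix m (Fin t) K) (hP : Injective P.mulVec) :
    ∃ f : Fin t ↪ m, (P.submatrix f id).det ≠ 0 := by
  obtain ⟨ρ, a, ha, hspan, hli⟩ := exists_linearIndependent' K P.row
  have : Finite ρ := Finite.of_injective a ha
  have : Fintype ρ := Fintype.ofFinite ρ
  have hcard : Fintype.card ρ = t := by
    rw [← finrank_span_eq_card hli, hspan, ← rank_eq_finrank_span_row, rank,
      LinearMap.finrank_range_of_inj hP, Module.finrank_fin_fun]
  let e : Fin t ≃ ρ := (Fintype.equivFinOfCardEq hcard).symm
  refine ⟨e.toEmbedding.trans ⟨a, ha⟩, ?_⟩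
  have hrows : LinearIndependent K fun i => P.submatrix (a ∘ e) id i := hli.comp e e.injective
  exact ((isUnit_iff_isUnit_det _).1 (linearIndependent_rows_iff_isUnit.1 hrows)).ne_zero

theorem IsCircuit.exists_submatrix_det_ne_zero {m n K : Type*} [Fintype m] [Fintype n] [Field K]
    {F : Matrix m n K} {c : n → K} (hc : IsCircuit (LinearMap.ker F.mulVecLin) c) {j : n}
    (hj : c j ≠ 0) :
    ∃ (t : ℕ) (f : Fin t ↪ m) (g : Fin t ↪ n), (∀ i, i ∈ Set.range g ↔ c i ≠ 0 ∧ i ≠ j) ∧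
      (F.submatrix f g).det ≠ 0 := by
  classical
  set T : Finset n := {i | c i ≠ 0 ∧ i ≠ j}
  let g : Fin #T ↪ n := T.equivFin.symm.toEmbedding.trans (Embedding.subtype _)
  have hrange : ∀ i, i ∈ Set.range g ↔ c i ≠ 0 ∧ i ≠ j := fun i => by
    refine ⟨fun ⟨l, hl⟩ => hl ▸ (mem_filter.1 (T.equivFin.symm l).2).2, fun hi => ?_⟩
    exact ⟨T.equivFin ⟨i, by simpa [T] using hi⟩, by simp [g]⟩
  -- by minimality of `c`, the columns in `support c \ {j}` are linearly independent
  have hinj : Injective (F.submatrix id g).mulVec := by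
    refine (injective_iff_map_eq_zero (F.submatrix id g).mulVecLin).2 fun a ha => ?_
    set x : n → K := extend g a 0
    have hxg : x ∘ g = a := funext fun l => g.injective.extend_apply a 0 l
    have hx : ∀ i ∉ Set.range g, x i = 0 := fun i hi => by simp [x, extend_apply' _ _ _ hi]
    have hxc : support x ⊂ support c := by
      refine Set.ssubset_iff_of_subset (fun i hi => ?_) |>.2 ⟨j, hj, fun hxj => ?_⟩
      · exact ((hrange i).1 (not_not.1 (mt (hx i) hi))).1
      · exact ((hrange j).1 (not_not.1 (mt (hx j) hxj))).2 rfl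
    have hxker : F *ᵥ x = 0 := by
      rw [F.mulVec_eq_submatrix_mulVec_comp g.injective hx, hxg]; exact ha
    rw [← hxg, hc.2.2 x hxker hxc]; rfl
  obtain ⟨f, hf⟩ := (F.submatrix id g).exists_submatrix_det_ne_zero hinj
  exact ⟨#T, f, g, hrange, hf⟩

theorem Matrix.card_add_rank_le_of_mulVec_eq_zero {m n ι R : Type*} [Fintype n] [Fintype ι]
    [CommRing R] [IsDomain R] [IsNoetherianRing R] (A : Matrix m n R) {w : ι → n → R}
    (hw : LinearIndependent R w) (hA : ∀ i, A *ᵥ w i = 0) :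
    Fintype.card ι + A.rank ≤ Fintype.card n := by
  have hnullity := Submodule.finrank_quotient_add_finrank (LinearMap.ker A.mulVecLin)
  rw [A.mulVecLin.quotKerEquivRange.finrank_eq, Module.finrank_pi] at hnullity
  have hker : Fintype.card ι ≤ Module.finrank R (LinearMap.ker A.mulVecLin) :=
    LinearIndependent.fintype_card_le_finrank
      (b := fun i => (⟨w i, hA i⟩ : LinearMap.ker A.mulVecLin))
      (LinearIndependent.of_comp (LinearMap.ker A.mulVecLin).subtype hw)
  rw [rank]
  omega

theorem Function.Injective.update_of_notMem_range {α β : Type*} [DecidableEq α] {g : α → β}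
    (hg : Injective g) (a : α) {b : β} (hb : b ∉ Set.range g) : Injective (update g a b) := by
  intro x y h
  by_cases hx : x = a <;> by_cases hy : y = a <;> simp only [update_apply, hx, hy] at h
  · exact hx.trans hy.symm
  · exact absurd ⟨y, h.symm⟩ hb
  · exact absurd ⟨x, h⟩ hb
  · exact hg h

namespace Matrix

section Cramer

variable {m n κ R : Type*} [Fintype κ] [DecidableEq κ] [DecidableEq n] [CommRing R]

/-- Cramer's rule solution of `A.submatrix f id *ᵥ x = 0` with `x j = det (A.submatrix f g)`,
supported on `{j} ∪ range g`. -/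
def cramerKerVec (A : Matrix m n R) (f : κ → m) (g : κ → n) (j : n) : n → R :=
  Pi.single j (A.submatrix f g).det -
    ∑ l, Pi.single (g l) (cramer (A.submatrix f g) (fun i => A (f i) j) l)

theorem submatrix_mulVec_cramerKerVec [Fintype n] (A : Matrix m n R) (f : κ → m) (g : κ → n)
    (j : n) : A.submatrix f id *ᵥ A.cramerKerVec f g j = 0 := by
  have h := mulVec_cramer (A.submatrix f g) (fun i => A (f i) j)
  rw [cramerKerVec, mulVec_sub, mulVec_sum]
  simp_rw [mulVec_single]
  ext i
  have := congrFun h i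
  simp only [mulVec, dotProduct, submatrix_apply, Pi.smul_apply, smul_eq_mul] at this
  simp [this, mul_comm]

variable {A : Matrix m n R} {f : κ → m} {g : κ → n} {j : n}

theorem cramerKerVec_apply_self (hj : j ∉ Set.range g) :
    A.cramerKerVec f g j j = (A.submatrix f g).det := by
  simp [cramerKerVec, fun l => ne_of_mem_of_not_mem (Set.mem_range_self l) hj]

theorem cramerKerVec_apply_of_ne {i : n} (hij : i ≠ j) (hi : i ∉ Set.range g) :
    A.cramerKerVec f g j i = 0 := by
  simp [cramerKerVec, hij, fun l => ne_of_mem_of_not_mem (Set.mem_range_self l) hi]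

end Cramer

theorem submatrix_updateCol {m n κ α : Type*} [DecidableEq κ] (A : Matrix m n α) (f : κ → m)
    (g : κ → n) (l : κ) (j : n) :
    (A.submatrix f g).updateCol l (fun i => A (f i) j) = A.submatrix f (update g l j) := by
  ext a b
  by_cases hb : b = l <;> simp [hb]

variable {m n R : Type*} [CommRing R] [LinearOrder R] [IsStrictOrderedRing R]

def IsSubdetBound (A : Matrix m n R) (Δ : R) : Prop :=
  ∀ (k : ℕ) (f : Fin k ↪ m) (g : Fin k ↪ n), |(A.submatrix f g).det| ≤ Δ

theorem IsSubdetBound.one_le {A : Matrix m n R} {Δ : R} (hΔ : A.IsSubdetBound Δ) : 1 ≤ Δ := by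
  simpa using hΔ 0 Embedding.ofIsEmpty Embedding.ofIsEmpty

theorem IsSubdetBound.sum_abs_cramerKerVec_le [Fintype n] [DecidableEq n] {A : Matrix m n R}
    {Δ : R} (hΔ : A.IsSubdetBound Δ) {t : ℕ} (f : Fin t ↪ m) (g : Fin t ↪ n) {j : n}
    (hj : j ∉ Set.range g) : ∑ i, |A.cramerKerVec f g j i| ≤ (t + 1) * Δ := by
  have hcramer : ∀ l, |cramer (A.submatrix f g) (fun i => A (f i) j) l| ≤ Δ := fun l => by
    rw [cramer_apply, submatrix_updateCol]
    exact hΔ t f ⟨_, g.injective.update_of_notMem_range l hj⟩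
  have hsingle : ∀ (k : n) (a : R), ∑ i, |Pi.single k a i| = |a| := fun k a => by
    simp_rw [Pi.apply_single (fun _ => abs) (fun _ => abs_zero), sum_pi_single',
      if_pos (mem_univ k)]
  calc ∑ i, |A.cramerKerVec f g j i|
      ≤ ∑ i, (|Pi.single j (A.submatrix f g).det i| +
          ∑ l, |Pi.single (g l) (cramer (A.submatrix f g) (fun i => A (f i) j) l) i|) := by
        refine sum_le_sum fun i _ => (abs_sub _ _).trans (add_le_add_right ?_ _)
        rw [Finset.sum_apply]
        exact abs_sum_le_sum_abs _ _
    _ = |(A.submatrix f g).det| + ∑ l, |cramer (A.submatrix f g) (fun i => A (f i) j) l| := by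
        rw [sum_add_distrib, sum_comm, hsingle]
        simp_rw [hsingle]
    _ ≤ Δ + ∑ l : Fin t, Δ := add_le_add (hΔ t f g) (sum_le_sum fun l _ => hcramer l)
    _ = (t + 1) * Δ := by simp only [sum_const, card_univ, Fintype.card_fin, nsmul_eq_mul]; ring

theorem map_intCast_mulVec {K : Type*} [Fintype n] [Ring K] (A : Matrix m n ℤ) (x : n → ℤ) :
    A.map (Int.cast : ℤ → K) *ᵥ (Int.cast ∘ x) = Int.cast ∘ (A *ᵥ x) := by
  ext i
  simpa using ((Int.castRingHom K).map_mulVec A x i).symm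

theorem map_intCast_mulVec_eq_zero_iff {K : Type*} [Fintype n] [Ring K] [CharZero K]
    (A : Matrix m n ℤ) (x : n → ℤ) :
    A.map (Int.cast : ℤ → K) *ᵥ (Int.cast ∘ x) = 0 ↔ A *ᵥ x = 0 := by
  simp only [map_intCast_mulVec, funext_iff, Function.comp_apply, Pi.zero_apply, Int.cast_eq_zero]

end Matrix

theorem IsCircuit.exists_eq_smul_intCast {m n : Type*} [Fintype m] [Fintype n] [DecidableEq n]
    {A : Matrix m n ℤ} {Δ : ℤ} (hΔ : A.IsSubdetBound Δ) {c : n → ℚ}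
    (hc : IsCircuit (LinearMap.ker (A.map (Int.cast : ℤ → ℚ)).mulVecLin) c) :
    ∃ (w : n → ℤ) (μ : ℚ), 0 < μ ∧ A *ᵥ w = 0 ∧ c = μ • (Int.cast ∘ w) ∧
      ∑ i, |w i| ≤ (A.rank + 1) * Δ := by
  obtain ⟨j, hj⟩ : ∃ j, c j ≠ 0 := Function.ne_iff.1 hc.2.1
  obtain ⟨t, f, g, hrange, hdet⟩ := hc.exists_submatrix_det_ne_zero hj
  have hjg : j ∉ Set.range g := fun h => ((hrange j).1 h).2 rfl
  set d := (A.submatrix f g).det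
  have hd : (d : ℚ) ≠ 0 := by rwa [Int.cast_det]
  have htr : t ≤ A.rank := by
    simpa using
      (rank_of_det_ne_zero (Int.cast_ne_zero.1 hd)).symm.trans_le (A.rank_submatrix_le f g)
  set w := A.cramerKerVec f g j
  have hck : A.map (Int.cast : ℤ → ℚ) *ᵥ c = 0 := hc.1
  have hwc : c j • (Int.cast ∘ w : n → ℚ) = (d : ℚ) • c := by
    convert smul_eq_smul_of_submatrix_det_ne_zero g.injective hdet (j := j) (x := Int.cast ∘ w)
      (fun i hi hij => by simp [w, cramerKerVec_apply_of_ne hij hi])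
      (fun i hi hij => not_ne_iff.1 fun h => hi ((hrange i).2 ⟨h, hij⟩))
      (((A.submatrix f id).map_intCast_mulVec_eq_zero_iff w).2
        (A.submatrix_mulVec_cramerKerVec f g j))
      (funext fun i => congrFun hck (f i))
    simp [w, cramerKerVec_apply_self hjg, d]
  have hwA : A *ᵥ w = 0 := by
    refine (map_intCast_mulVec_eq_zero_iff (K := ℚ) A w).1 ((smul_eq_zero.1 ?_).resolve_left hj)
    rw [← mulVec_smul, hwc, mulVec_smul, hck, smul_zero]
  obtain ⟨μ, hμ, hcw⟩ : ∃ μ : ℚ, μ ≠ 0 ∧ c = μ • (Int.cast ∘ w : n → ℚ) :=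
    ⟨c j / d, div_ne_zero hj hd, by
      rw [div_eq_inv_mul, mul_smul, hwc, smul_smul, inv_mul_cancel₀ hd, one_smul]⟩
  have hnorm : ∑ i, |w i| ≤ (A.rank + 1) * Δ :=
    (hΔ.sum_abs_cramerKerVec_le f g hjg).trans <| by
      gcongr
      linarith [hΔ.one_le]
  rcases hμ.lt_or_gt with hneg | hpos
  · refine ⟨-w, -μ, neg_pos.2 hneg, by rw [mulVec_neg, hwA, neg_zero], ?_, by simpa using hnorm⟩
    rw [hcw]; ext i; simp
  · exact ⟨w, μ, hpos, hwA, hcw, hnorm⟩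

theorem LinearIndependent.of_smul_intCast {ι n : Type*} {w : ι → n → ℤ} {μ : ι → ℚ}
    (hμ : ∀ i, μ i ≠ 0) (h : LinearIndependent ℚ fun i => μ i • (Int.cast ∘ w i : n → ℚ)) :
    LinearIndependent ℤ w := by
  have hcast : LinearIndependent ℚ fun i => (Int.cast ∘ w i : n → ℚ) := by
    convert h.units_smul fun i => Units.mk0 (μ i)⁻¹ (inv_ne_zero (hμ i)) using 1
    ext i : 1
    rw [Pi.smul_apply', Units.smul_mk0, smul_smul, inv_mul_cancel₀ (hμ i), one_smul]
  exact .of_comp ((Algebra.linearMap ℤ ℚ).compLeft n) (hcast.restrict_scalars' ℤ)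

theorem sum_abs_le_of_intCast_eq_sum_smul {ι n : Type*} [Fintype ι] [Fintype n] {v : n → ℤ}
    {w : ι → n → ℤ} {μ : ι → ℚ} (hμ₀ : ∀ i, 0 ≤ μ i) (hμ₁ : ∀ i, μ i ≤ 1)
    (h : ∑ i, μ i • (Int.cast ∘ w i : n → ℚ) = Int.cast ∘ v) :
    ∑ j, |v j| ≤ ∑ i, ∑ j, |w i j| := by
  have hv : ∀ j, (v j : ℚ) = ∑ i, μ i * w i j := fun j => by
    simpa [Finset.sum_apply] using (congrFun h j).symm
  have : ∑ j, |(v j : ℚ)| ≤ ∑ i, ∑ j, |(w i j : ℚ)| := calc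
    ∑ j, |(v j : ℚ)| ≤ ∑ j, ∑ i, |μ i * w i j| := by
        simp_rw [hv]; exact sum_le_sum fun j _ => abs_sum_le_sum_abs _ _
    _ ≤ ∑ j, ∑ i, |(w i j : ℚ)| := sum_le_sum fun j _ => sum_le_sum fun i _ => by
        rw [abs_mul, abs_of_nonneg (hμ₀ i)]
        exact mul_le_of_le_one_left (abs_nonneg _) (hμ₁ i)
    _ = ∑ i, ∑ j, |(w i j : ℚ)| := sum_comm
  exact_mod_cast this

namespace IsGraver

variable {m n : Type*} [Fintype n] {E : Matrix m n ℤ} {v w : n → ℤ}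

theorem eq_of_sameOrthant_of_abs_le (hv : IsGraver E v) (hw₀ : w ≠ 0) (hw : E *ᵥ w = 0)
    (hvw : SameOrthant v w) (hle : ∀ j, |w j| ≤ |v j|) : w = v := by
  by_contra hne
  refine hv.2.2 w (v - w) hw₀ (sub_ne_zero.2 (Ne.symm hne)) hw
    (by rw [mulVec_sub, hv.2.1, hw, sub_zero]) hvw (fun j => ?_) (add_sub_cancel w v).symm
  have : v j * w j ≤ v j * v j := calc
    v j * w j ≤ |v j| * |w j| := by rw [← abs_mul]; exact le_abs_self _
    _ ≤ |v j| * |v j| := mul_le_mul_of_nonneg_left (hle j) (abs_nonneg _)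
    _ = v j * v j := abs_mul_abs_self _
  simp only [Pi.sub_apply, mul_sub]
  linarith

theorem le_one_of_smul_intCast (hv : IsGraver E v) (hw : E *ᵥ w = 0) (hw₀ : w ≠ 0) {μ : ℚ}
    (hμ : 0 < μ) (hconf : SignConformal (μ • (Int.cast ∘ w : n → ℚ)) (Int.cast ∘ v))
    (hle : ∀ j, |(μ • (Int.cast ∘ w : n → ℚ)) j| ≤ |(v j : ℚ)|) : μ ≤ 1 := by
  by_contra! hμ₁
  have hle' : ∀ j, μ * |(w j : ℚ)| ≤ |(v j : ℚ)| := fun j => by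
    simpa [abs_mul, abs_of_pos hμ] using hle j
  have hvw : SameOrthant v w := fun j => by
    have := hconf.mul_nonneg j
    simp only [Pi.smul_apply, Function.comp_apply, smul_eq_mul, mul_assoc] at this
    rw [mul_comm]
    exact_mod_cast (mul_nonneg_iff_of_pos_left hμ).1 this
  have habs : ∀ j, |w j| ≤ |v j| := fun j => by
    exact_mod_cast (le_mul_of_one_le_left (abs_nonneg _) hμ₁.le).trans (hle' j)
  obtain rfl := hv.eq_of_sameOrthant_of_abs_le hw₀ hw hvw habs
  obtain ⟨j, hj⟩ : ∃ j, w j ≠ 0 := Function.ne_iff.1 hw₀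
  have hpos : (0 : ℚ) < |(w j : ℚ)| := abs_pos.2 (Int.cast_ne_zero.2 hj)
  exact not_le.2 hμ₁ ((mul_le_iff_le_one_left hpos).1 (hle' j))

end IsGraver

/-- If `A ∈ ℤ^{m×n}` has rank `r` and all subdeterminants of `A` are
bounded in absolute value by `Δ`, then every Graver basis element `v` of `A`
satisfies `‖v‖₁ ≤ (n - r)(r + 1)Δ`. -/
theorem graver_l1_determinant_bound {m n : ℕ} (A : Matrix (Fin m) (Fin n) ℤ)
    (r : ℕ) (hr : A.rank = r) (Δ : ℤ)
    (hΔ : ∀ (k : ℕ) (f : Fin k ↪ Fin m) (g : Fin k ↪ Fin n),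
      |(A.submatrix f g).det| ≤ Δ)
    (v : Fin n → ℤ) (hv : IsGraver A v) :
    ∑ i, |v i| ≤ ((n : ℤ) - (r : ℤ)) * ((r : ℤ) + 1) * Δ := by
  obtain ⟨k, c, hcirc, hconf, hind, hsum⟩ :=
    exists_sum_isCircuit_signConformal (W := LinearMap.ker (A.map (Int.cast : ℤ → ℚ)).mulVecLin)
      ((map_intCast_mulVec_eq_zero_iff A v).2 hv.2.1)
  choose w μ hμ hwA hcw hwnorm using fun i => (hcirc i).exists_eq_smul_intCast hΔ
  have hw₀ : ∀ i, w i ≠ 0 := fun i h => (hcirc i).2.1 (by simp [hcw i, h])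
  have hμ₁ : ∀ i, μ i ≤ 1 := fun i => hv.le_one_of_smul_intCast (hwA i) (hw₀ i) (hμ i)
    (hcw i ▸ hconf i) (hcw i ▸ abs_apply_le_of_sum_signConformal hconf hsum i)
  have hk : k + r ≤ n := by
    simpa [hr] using A.card_add_rank_le_of_mulVec_eq_zero
      (LinearIndependent.of_smul_intCast (fun i => (hμ i).ne') (funext hcw ▸ hind)) hwA
  calc ∑ i, |v i| ≤ ∑ i, ∑ j, |w i j| :=
        sum_abs_le_of_intCast_eq_sum_smul (fun i => (hμ i).le) hμ₁ (by simpa [hcw] using hsum)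
    _ ≤ ∑ _i : Fin k, ((r : ℤ) + 1) * Δ := sum_le_sum fun i _ => hr ▸ hwnorm i
    _ = k * (((r : ℤ) + 1) * Δ) := by simp
    _ ≤ ((n : ℤ) - r) * (((r : ℤ) + 1) * Δ) := by
        gcongr
        · have := (IsSubdetBound.one_le (A := A) hΔ); positivity
        · omega
    _ = ((n : ℤ) - r) * ((r : ℤ) + 1) * Δ := by ring
end

section
/- Let f : R^n → R be separable convex, i.e., f(x) = Σ f_i(x_i) with each f_i : R → R convex. Let z ∈ R^n and let u^1, ..., u^k ∈ R^n lie pairwise in the same orthant (sign-compatible). Write r = z + Σ_{i} β_i u^i and w = z + Σ_i γ_i u^i for nonnegative reals β_i, γ_i, and s = z + Σ_i (β_i + γ_i) u^i. Then f(s) - f(z) ≥ [f(r) - f(z)] + [f(w) - f(z)] (superadditivity of separable convex functions along sign-compatible directions). -/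
/-! Along every coordinate the two increments `∑ βⱼ uⱼ i` and `∑ γⱼ uⱼ i` have the same sign,
because their product expands into the nonnegative terms `βⱼ γₗ uⱼ i uₗ i`. For a convex function
of one variable, the increment over `[z, z + a + b]` dominates the sum of the increments over
`[z, z + a]` and `[z, z + b]` when `a` and `b` have the same sign, as `z + a` and `z + b` are
mirror-image convex combinations of the endpoints. Summing over the coordinates gives the claim. -/

open Finset

section OneVariable

variable {𝕜 : Type*} [Field 𝕜] [LinearOrder 𝕜] [IsStrictOrderedRing 𝕜] {s : Set 𝕜} {g : 𝕜 → 𝕜}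
  {z a b : 𝕜}

theorem ConvexOn.add_le_add_of_nonneg (hg : ConvexOn 𝕜 s g) (hz : z ∈ s) (hzab : z + a + b ∈ s)
    (ha : 0 ≤ a) (hb : 0 ≤ b) : g (z + a) + g (z + b) ≤ g z + g (z + a + b) := by
  rcases (add_nonneg ha hb).eq_or_lt with hab | hab
  · obtain rfl : a = 0 := by linarith
    obtain rfl : b = 0 := by linarith
    simp
  set t := a / (a + b)
  have ht₀ : 0 ≤ t := by positivity
  have ht₁ : 0 ≤ 1 - t := by rw [sub_nonneg, div_le_one hab]; linarith
  have hza : (1 - t) • z + t • (z + a + b) = z + a := by simp only [t, smul_eq_mul]; field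
  have hzb : t • z + (1 - t) • (z + a + b) = z + b := by simp only [t, smul_eq_mul]; field
  have h₁ := hza ▸ hg.2 hz hzab ht₁ ht₀ (by ring)
  have h₂ := hzb ▸ hg.2 hz hzab ht₀ ht₁ (by ring)
  simp only [smul_eq_mul] at h₁ h₂
  linarith

theorem ConvexOn.add_le_add_of_mul_nonneg (hg : ConvexOn 𝕜 s g) (hz : z ∈ s)
    (hzab : z + a + b ∈ s) (hab : 0 ≤ a * b) : g (z + a) + g (z + b) ≤ g z + g (z + a + b) := by
  rcases mul_nonneg_iff.mp hab with ⟨ha, hb⟩ | ⟨ha, hb⟩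
  · exact hg.add_le_add_of_nonneg hz hzab ha hb
  · have := hg.add_le_add_of_nonneg hzab (by convert hz using 1; ring) (neg_nonneg.mpr ha)
      (neg_nonneg.mpr hb)
    ring_nf at this ⊢
    linarith

end OneVariable

theorem Finset.sum_mul_sum_nonneg_of_mul_nonneg {ι R : Type*} [CommSemiring R] [PartialOrder R]
    [IsOrderedRing R] (t : Finset ι) (x β γ : ι → R) (hx : ∀ i j, 0 ≤ x i * x j)
    (hβ : ∀ i, 0 ≤ β i) (hγ : ∀ i, 0 ≤ γ i) :
    0 ≤ (∑ i ∈ t, β i * x i) * (∑ j ∈ t, γ j * x j) := by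
  rw [sum_mul_sum]
  refine sum_nonneg fun i _ => sum_nonneg fun j _ => ?_
  calc (0 : R) ≤ β i * γ j * (x i * x j) := mul_nonneg (mul_nonneg (hβ i) (hγ j)) (hx i j)
    _ = β i * x i * (γ j * x j) := by ring

/-- superadditivity of separable convex functions along
sign-compatible directions: if `f(x) = Σᵢ fᵢ(xᵢ)` with each `fᵢ` convex,
`u¹, …, u^k` lie pairwise in the same orthant, `β, γ ≥ 0`,
`r = z + Σ βᵢ uⁱ`, `w = z + Σ γᵢ uⁱ` and `s = z + Σ (βᵢ+γᵢ) uⁱ`, then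
`f(s) - f(z) ≥ [f(r) - f(z)] + [f(w) - f(z)]`. -/
theorem separable_convex_superadditive {n k : ℕ}
    (fi : Fin n → ℝ → ℝ) (hconv : ∀ i, ConvexOn ℝ Set.univ (fi i))
    (f : (Fin n → ℝ) → ℝ) (hf : ∀ x, f x = ∑ i, fi i (x i))
    (z : Fin n → ℝ) (u : Fin k → (Fin n → ℝ))
    (hu : ∀ a b : Fin k, ∀ i, 0 ≤ u a i * u b i)
    (β γ : Fin k → ℝ) (hβ : ∀ i, 0 ≤ β i) (hγ : ∀ i, 0 ≤ γ i) :
    (f (z + ∑ i, β i • u i) - f z) + (f (z + ∑ i, γ i • u i) - f z) ≤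
      f (z + ∑ i, (β i + γ i) • u i) - f z := by
  have hcoord := sum_le_sum (s := univ) fun i _ => (hconv i).add_le_add_of_mul_nonneg
    (Set.mem_univ (z i)) (Set.mem_univ _)
    (sum_mul_sum_nonneg_of_mul_nonneg univ (fun j => u j i) β γ (fun a b => hu a b i) hβ hγ)
  simp only [hf, Pi.add_apply, Finset.sum_apply, Pi.smul_apply, smul_eq_mul, add_mul, sum_add_distrib,
    ← add_assoc] at hcoord ⊢
  linarith
end
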